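/- Let S = k[x_1,…,x_r] with r ≥ 4 and 4 + i ≤ r. The ideal (x_1, x_3)·(x_3, x_4, …, x_{i+4}) in S equals the intersection (x_1, x_3) ∩ (x_3, …, x_{i+4}) ∩ (x_1, x_3, …, x_{i+4})², i.e., the product ideal defining a degenerate union of two linear spaces is the ideal of a (2, i+2)-sundial. -/

import Mathlib

/-!
All ideals involved are spanned by monomials, so the equality can be tested monomial by monomial.
For any sets of variables `A`, `B`, a monomial lies in `(A)(B)` iff it is divisible by some
`x_a x_b` with `a ∈ A`, `b ∈ B`; it lies in `(A) ∩ (B) ∩ (A ∪ B)²` iff it involves a variable of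
`A`, a variable of `B`, and has degree at least two in `A ∪ B`, and these conditions agree.
In the theorem `A = {x_1, x_3}` and `B = {x_3, …, x_{i+4}}`, so `(x_1, x_3, …, x_{i+4}) = (A ∪ B)`.
-/

open MvPolynomial Pointwise

namespace Finsupp

variable {σ : Type*}

theorem single_add_single_le_of_ne {a b : σ} {m : σ →₀ ℕ} (hab : a ≠ b) (ha : m a ≠ 0)
    (hb : m b ≠ 0) : single a 1 + single b 1 ≤ m := by
  classical
  intro s
  rw [coe_add, Pi.add_apply, single_apply, single_apply]
  split_ifs <;> grind

theorem apply_ne_zero_of_single_add_single_le_left {a b : σ} {m : σ →₀ ℕ}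
    (h : single a 1 + single b 1 ≤ m) : m a ≠ 0 :=
  Nat.one_le_iff_ne_zero.mp <| single_le_iff.mp <| le_trans le_self_add h

theorem apply_ne_zero_of_single_add_single_le_right {a b : σ} {m : σ →₀ ℕ}
    (h : single a 1 + single b 1 ≤ m) : m b ≠ 0 :=
  Nat.one_le_iff_ne_zero.mp <| single_le_iff.mp <| le_trans le_add_self h

/-- The degree condition matters only when the witnesses for `A` and `B` are one `a ∈ A ∩ B`:
it then supplies a second variable `x` (possibly `a` itself) with `a + x ≤ m`. -/
theorem exists_single_add_single_le_iff {A B : Set σ} {m : σ →₀ ℕ} :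
    (∃ a ∈ A, ∃ b ∈ B, single a 1 + single b 1 ≤ m) ↔
      (∃ a ∈ A, m a ≠ 0) ∧ (∃ b ∈ B, m b ≠ 0) ∧
        ∃ c ∈ A ∪ B, ∃ d ∈ A ∪ B, single c 1 + single d 1 ≤ m := by
  constructor
  · rintro ⟨a, ha, b, hb, hab⟩
    exact ⟨⟨a, ha, apply_ne_zero_of_single_add_single_le_left hab⟩,
      ⟨b, hb, apply_ne_zero_of_single_add_single_le_right hab⟩,
      a, Or.inl ha, b, Or.inr hb, hab⟩
  rintro ⟨⟨a, ha, hma⟩, ⟨b, hb, hmb⟩, c, hc, d, hd, hcd⟩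
  obtain hab | rfl := ne_or_eq a b
  · exact ⟨a, ha, b, hb, single_add_single_le_of_ne hab hma hmb⟩
  obtain ⟨x, hx, hax⟩ : ∃ x ∈ A ∪ B, single a 1 + single x 1 ≤ m := by
    rcases eq_or_ne a c with rfl | hac
    · exact ⟨d, hd, hcd⟩
    · exact ⟨c, hc, single_add_single_le_of_ne hac hma
        (apply_ne_zero_of_single_add_single_le_left hcd)⟩
  rcases hx with hxA | hxB
  · exact ⟨x, hxA, a, hb, add_comm (single a 1) _ ▸ hax⟩
  · exact ⟨a, ha, x, hxB, hax⟩

end Finsupp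

namespace MvPolynomial

variable {σ R : Type*} [CommSemiring R]

theorem span_monomial_image_mul_span_monomial_image (s t : Set (σ →₀ ℕ)) :
    Ideal.span ((fun s => monomial s (1 : R)) '' s) *
        Ideal.span ((fun s => monomial s (1 : R)) '' t) =
      Ideal.span ((fun s => monomial s (1 : R)) '' (s + t)) := by
  rw [Ideal.span_mul_span', ← Set.image2_mul, ← Set.image2_add, Set.image2_image_left,
    Set.image2_image_right, Set.image_image2]
  simp only [monomial_mul, mul_one]

theorem X_image_eq_monomial_image (A : Set σ) :
    (X '' A : Set (MvPolynomial σ R)) =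
      (fun s => monomial s (1 : R)) '' ((fun a => Finsupp.single a 1) '' A) := by
  rw [Set.image_image]
  rfl

theorem mem_span_X_image_mul_span_X_image {A B : Set σ} {p : MvPolynomial σ R} :
    p ∈ Ideal.span (X '' A) * Ideal.span (X '' B) ↔
      ∀ m ∈ p.support, ∃ a ∈ A, ∃ b ∈ B, Finsupp.single a 1 + Finsupp.single b 1 ≤ m := by
  simp only [X_image_eq_monomial_image, span_monomial_image_mul_span_monomial_image,
    mem_ideal_span_monomial_image, Set.mem_add, Set.exists_mem_image,
    exists_exists_and_exists_and_eq_and]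

theorem span_X_image_mul_span_X_image (A B : Set σ) :
    Ideal.span (X '' A : Set (MvPolynomial σ R)) * Ideal.span (X '' B) =
      Ideal.span (X '' A) ⊓ Ideal.span (X '' B) ⊓ Ideal.span (X '' (A ∪ B)) ^ 2 := by
  ext p
  rw [Ideal.mem_inf, Ideal.mem_inf, sq, mem_span_X_image_mul_span_X_image,
    mem_span_X_image_mul_span_X_image, mem_ideal_span_X_image, mem_ideal_span_X_image]
  simp only [← forall₂_and, and_assoc]
  exact forall₂_congr fun _ _ => Finsupp.exists_single_add_single_le_iff

end MvPolynomial

/-- In `S = k[x_1,…,x_r]` (with `x_j` realized as `MvPolynomial.X (j-1)`), for `4 + i ≤ r`,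
the product ideal `(x_1, x_3)·(x_3, x_4, …, x_{i+4})` equals the intersection
`(x_1, x_3) ∩ (x_3, …, x_{i+4}) ∩ (x_1, x_3, …, x_{i+4})²`: the degenerate union of two
linear spaces is a `(2, i+2)`-sundial. -/
theorem product_ideal_eq_sundial_ideal (k : Type*) [Field k] (r i : ℕ) (hi : 4 + i ≤ r) :
    Ideal.span {(MvPolynomial.X (⟨0, by omega⟩ : Fin r) : MvPolynomial (Fin r) k),
        MvPolynomial.X ⟨2, by omega⟩} *
      Ideal.span ((fun j => (MvPolynomial.X j : MvPolynomial (Fin r) k)) ''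
        {j : Fin r | 2 ≤ (j : ℕ) ∧ (j : ℕ) ≤ i + 3}) =
    Ideal.span {(MvPolynomial.X (⟨0, by omega⟩ : Fin r) : MvPolynomial (Fin r) k),
        MvPolynomial.X ⟨2, by omega⟩} ⊓
      Ideal.span ((fun j => (MvPolynomial.X j : MvPolynomial (Fin r) k)) ''
        {j : Fin r | 2 ≤ (j : ℕ) ∧ (j : ℕ) ≤ i + 3}) ⊓
      (Ideal.span ({(MvPolynomial.X (⟨0, by omega⟩ : Fin r) : MvPolynomial (Fin r) k)} ∪
        (fun j => (MvPolynomial.X j : MvPolynomial (Fin r) k)) ''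
          {j : Fin r | 2 ≤ (j : ℕ) ∧ (j : ℕ) ≤ i + 3})) ^ 2 := by
  set T : Set (Fin r) := {j : Fin r | 2 ≤ (j : ℕ) ∧ (j : ℕ) ≤ i + 3}
  have hT : (⟨2, by omega⟩ : Fin r) ∈ T := ⟨le_rfl, by simp⟩
  have hunion : ({⟨0, by omega⟩} ∪ T : Set (Fin r)) = {⟨0, by omega⟩, ⟨2, by omega⟩} ∪ T := by
    rw [Set.singleton_union, Set.insert_union, Set.singleton_union, Set.insert_eq_of_mem hT]
  rw [← Set.image_pair, ← Set.image_singleton, ← Set.image_union, hunion]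
  exact span_X_image_mul_span_X_image _ _
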